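/- arXiv:1802.09834 — 3 statements merged into one kernel-verified Lean document; each statement's English description precedes it below -/
import Mathlib

section
/- Let K ≥ 1, and for each k = 0,…,K−1 let D_k be an n×n real diagonal matrix all of whose diagonal entries lie in [−1,1], and let W_k be a d×d real matrix with nonnegative diagonal entries ((W_k)_{ii} ≥ 0 for all i). If s := ∑_{k=0}^{K−1} ‖W_k‖_∞ < 1, then the matrix M = I − ∑_{k=0}^{K−1} W_k ⊗ D_k is strictly diagonally dominant by rows: for every row index (i,r), |1 − ∑_{k} (W_k)_{ii} (D_k)_{rr}| > ∑_{(j,s) ≠ (i,r)} |M_{(i,r),(j,s)}|. -/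
/-!
Since `D` is diagonal, the off-diagonal part of row `(i, r)` of `W ⊗ D` is the off-diagonal
part of row `i` of `W` scaled by `|D r r| ≤ 1`, so it is at most `‖W‖_∞ - W i i`. Summing over
`k`, the off-diagonal row sum of `M` is at most `∑ ‖W k‖_∞ - ∑ W k i i < 1 - ∑ W k i i`, and the
latter bounds the diagonal entry `|1 - ∑ W k i i * D k r r|` from below.
-/

open scoped Kronecker

noncomputable def infNorm {m n : Type*} [Fintype m] [Fintype n]
    (A : Matrix m n ℝ) : ℝ :=
  ⨆ i, ∑ j, |A i j|

open Finset Matrix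

lemma absRowSum_le_infNorm {m n : Type*} [Fintype m] [Fintype n]
    (A : Matrix m n ℝ) (i : m) : ∑ j, |A i j| ≤ infNorm A :=
  le_ciSup (f := fun i => ∑ j, |A i j|) (Set.finite_range _).bddAbove i

lemma one_sub_sum_le_abs_one_sub_sum_mul {ι : Type*} (s : Finset ι) (w x : ι → ℝ)
    (hw : ∀ k ∈ s, 0 ≤ w k) (hx : ∀ k ∈ s, |x k| ≤ 1) :
    1 - ∑ k ∈ s, w k ≤ |1 - ∑ k ∈ s, w k * x k| := by
  have hsum : |∑ k ∈ s, w k * x k| ≤ ∑ k ∈ s, w k :=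
    (abs_sum_le_sum_abs _ _).trans <| sum_le_sum fun k hk => by
      rw [abs_mul, abs_of_nonneg (hw k hk)]
      exact mul_le_of_le_one_right (hw k hk) (hx k hk)
  have := abs_sub_abs_le_abs_sub (1 : ℝ) (∑ k ∈ s, w k * x k)
  rw [abs_one] at this
  linarith

def offDiagAbsRowSum {m : Type*} [Fintype m] [DecidableEq m]
    (A : Matrix m m ℝ) (i : m) : ℝ :=
  ∑ j ∈ univ.erase i, |A i j|

section OffDiagAbsRowSum

variable {m : Type*} [Fintype m] [DecidableEq m]

lemma offDiagAbsRowSum_nonneg (A : Matrix m m ℝ) (i : m) : 0 ≤ offDiagAbsRowSum A i :=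
  sum_nonneg fun _ _ => abs_nonneg _

lemma offDiagAbsRowSum_eq_sub (A : Matrix m m ℝ) (i : m) :
    offDiagAbsRowSum A i = ∑ j, |A i j| - |A i i| :=
  sum_erase_eq_sub (mem_univ i)

lemma offDiagAbsRowSum_one_sub (A : Matrix m m ℝ) (i : m) :
    offDiagAbsRowSum (1 - A) i = offDiagAbsRowSum A i :=
  sum_congr rfl fun j hj => by
    rw [Matrix.sub_apply, one_apply_ne (ne_of_mem_erase hj).symm, zero_sub, abs_neg]

lemma offDiagAbsRowSum_sum_le {ι : Type*} (s : Finset ι) (A : ι → Matrix m m ℝ) (i : m) :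
    offDiagAbsRowSum (∑ k ∈ s, A k) i ≤ ∑ k ∈ s, offDiagAbsRowSum (A k) i := by
  unfold offDiagAbsRowSum
  rw [sum_comm]
  exact sum_le_sum fun j _ => by rw [Matrix.sum_apply]; exact abs_sum_le_sum_abs _ _

lemma offDiagAbsRowSum_le_infNorm_sub (A : Matrix m m ℝ) (i : m) (hA : 0 ≤ A i i) :
    offDiagAbsRowSum A i ≤ infNorm A - A i i := by
  rw [offDiagAbsRowSum_eq_sub, abs_of_nonneg hA]
  exact sub_le_sub_right (absRowSum_le_infNorm A i) _

end OffDiagAbsRowSum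

lemma offDiagAbsRowSum_kronecker_of_isDiag {m n : Type*} [Fintype m] [DecidableEq m]
    [Fintype n] [DecidableEq n] (A : Matrix m m ℝ) {D : Matrix n n ℝ} (hD : D.IsDiag)
    (i : m) (r : n) :
    offDiagAbsRowSum (A ⊗ₖ D) (i, r) = offDiagAbsRowSum A i * |D r r| := by
  have hDrow : ∑ s, |D r s| = |D r r| :=
    sum_eq_single r (fun s _ hs => by rw [hD hs.symm, abs_zero]) (by simp)
  have hrow : ∑ p : m × n, |(A ⊗ₖ D) (i, r) p| = (∑ j, |A i j|) * |D r r| := by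
    simp only [Fintype.sum_prod_type, kroneckerMap_apply, abs_mul, ← mul_sum, ← hDrow,
      sum_mul]
  rw [offDiagAbsRowSum_eq_sub, offDiagAbsRowSum_eq_sub, hrow, kroneckerMap_apply, abs_mul,
    sub_mul]

theorem id_sub_kronecker_sum_strictly_diag_dominant_general {K n d : ℕ}
    (D : Fin K → Matrix (Fin n) (Fin n) ℝ)
    (W : Fin K → Matrix (Fin d) (Fin d) ℝ)
    (hDdiag : ∀ k, (D k).IsDiag)
    (hDbound : ∀ k r, D k r r ∈ Set.Icc (-1 : ℝ) 1)
    (hWdiag : ∀ k i, 0 ≤ W k i i)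
    (hW : ∑ k, infNorm (W k) < 1) :
    ∀ (i : Fin d) (r : Fin n),
      |1 - ∑ k, W k i i * D k r r| >
        ∑ p ∈ Finset.univ.erase (i, r),
          |((1 : Matrix (Fin d × Fin n) (Fin d × Fin n) ℝ) - ∑ k, W k ⊗ₖ D k) (i, r) p| := by
  intro i r
  have hD : ∀ k, |D k r r| ≤ 1 := fun k => abs_le.mpr (hDbound k r)
  calc offDiagAbsRowSum (1 - ∑ k, W k ⊗ₖ D k) (i, r)
      = offDiagAbsRowSum (∑ k, W k ⊗ₖ D k) (i, r) := offDiagAbsRowSum_one_sub _ _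
    _ ≤ ∑ k, offDiagAbsRowSum (W k) i * |D k r r| := by
        simpa only [offDiagAbsRowSum_kronecker_of_isDiag _ (hDdiag _)] using
          offDiagAbsRowSum_sum_le univ (fun k => W k ⊗ₖ D k) (i, r)
    _ ≤ ∑ k, (infNorm (W k) - W k i i) := sum_le_sum fun k _ =>
        (mul_le_of_le_one_right (offDiagAbsRowSum_nonneg _ _) (hD k)).trans
          (offDiagAbsRowSum_le_infNorm_sub _ _ (hWdiag k i))
    _ < 1 - ∑ k, W k i i := by rw [sum_sub_distrib]; linarith
    _ ≤ |1 - ∑ k, W k i i * D k r r| :=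
        one_sub_sum_le_abs_one_sub_sum_mul _ _ _ (fun k _ => hWdiag k i) (fun k _ => hD k)

/-- If each `D k` is diagonal with diagonal entries in `[-1,1]`, each `W k` has
nonnegative diagonal entries, and `∑ k, ‖W k‖_∞ < 1`, then
`M = I - ∑ k, W k ⊗ D k` is strictly diagonally dominant by rows. -/
theorem id_sub_kronecker_sum_strictly_diag_dominant {K n d : ℕ} (hK : 1 ≤ K)
    (D : Fin K → Matrix (Fin n) (Fin n) ℝ)
    (W : Fin K → Matrix (Fin d) (Fin d) ℝ)
    (hDdiag : ∀ k, (D k).IsDiag)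
    (hDbound : ∀ k r, D k r r ∈ Set.Icc (-1 : ℝ) 1)
    (hWdiag : ∀ k i, 0 ≤ W k i i)
    (hW : ∑ k, infNorm (W k) < 1) :
    ∀ (i : Fin d) (r : Fin n),
      |1 - ∑ k, W k i i * D k r r| >
        ∑ p ∈ Finset.univ.erase (i, r),
          |((1 : Matrix (Fin d × Fin n) (Fin d × Fin n) ℝ) - ∑ k, W k ⊗ₖ D k) (i, r) p| :=
  id_sub_kronecker_sum_strictly_diag_dominant_general D W hDdiag hDbound hWdiag hW
end

section
/- Let K₁ ≥ 1, and for k = 0,…,K₁−1 let D_k be an n×n real diagonal matrix with all diagonal entries in [−1,1] and W_k a d'×d' real matrix; assume ∑_{k=0}^{K₁−1} ‖W_kᵀ‖_∞ < 1. Let X be a fixed n×d real matrix, V₀ a d×d' real matrix, and for k = 1,…,K₂−1 let E_k be an n×n real diagonal matrix with diagonal entries in [−1,1] and V_k a d×d' real matrix. Define the recursion Y_{t+1} = ∑_{k=0}^{K₁−1} D_k Y_t W_k + X V₀ and O_{t+1} = Y_{t+1} + ∑_{k=1}^{K₂−1} E_k X V_k, starting from an arbitrary n×d' real matrix Y₀.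 Then: (a) there is a unique n×d' real matrix Y* satisfying Y* = ∑_{k=0}^{K₁−1} D_k Y* W_k + X V₀; (b) Y_t converges to Y* as t → ∞ (entrywise), regardless of Y₀; and (c) O_t converges to O* = Y* + ∑_{k=1}^{K₂−1} E_k X V_k. -/
/-!
The affine map `M ↦ ∑ k, D k * M * W k + X * V0` is a contraction for the entrywise sup norm:
multiplying on the left by a diagonal matrix with entries in `[-1, 1]` does not increase that
norm, and multiplying on the right by `W` scales it by at most the largest absolute column sum
of `W`, which is `infNorm Wᵀ`. Banach's fixed point theorem gives the unique fixed point `Y*` and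
the convergence of the iterates `Y t`, and `O t` differs from `Y t` by a constant.
-/

open scoped Matrix

open Filter Topology

attribute [local instance] Matrix.normedAddCommGroup

-- Stated for the uniform structure of the sup norm, which is not reducibly `Matrix`'s own.
instance {m n : Type*} [Fintype m] [Fintype n] :
    @CompleteSpace (Matrix m n ℝ) (Matrix.normedAddCommGroup.toUniformSpace) :=
  inferInstanceAs (CompleteSpace (m → n → ℝ))

lemma infNorm_nonneg {m n : Type*} [Fintype m] [Fintype n] (A : Matrix m n ℝ) :
    0 ≤ infNorm A :=
  Real.iSup_nonneg fun _ => Finset.sum_nonneg fun _ _ => abs_nonneg _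

lemma sum_abs_le_infNorm_transpose {m n : Type*} [Fintype m] [Fintype n]
    (W : Matrix m n ℝ) (j : n) : ∑ l, |W l j| ≤ infNorm Wᵀ :=
  le_ciSup (f := fun r => ∑ l, |Wᵀ r l|) (Set.finite_range _).bddAbove j

lemma Matrix.IsDiag.mul_apply {n m α : Type*} [Fintype n] [NonUnitalNonAssocSemiring α]
    {D : Matrix n n α} (hD : D.IsDiag) (P : Matrix n m α) (i : n) (j : m) :
    (D * P) i j = D i i * P i j := by
  classical
  conv_lhs => rw [← hD.diagonal_diag]
  exact Matrix.diagonal_mul _ _ _ _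

section EntrywiseSupNorm

variable {m n p : Type*} [Fintype m] [Fintype n] [Fintype p]

lemma norm_diag_mul_le {D : Matrix m m ℝ} (hD : D.IsDiag) (hD1 : ∀ i, |D i i| ≤ 1)
    (M : Matrix m n ℝ) : ‖D * M‖ ≤ ‖M‖ := by
  refine (Matrix.norm_le_iff (norm_nonneg _)).2 fun i j => ?_
  rw [hD.mul_apply, norm_mul, Real.norm_eq_abs]
  exact (mul_le_of_le_one_left (norm_nonneg _) (hD1 i)).trans M.norm_entry_le_entrywise_sup_norm

lemma norm_mul_le_infNorm_transpose_mul (M : Matrix m n ℝ) (W : Matrix n p ℝ) :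
    ‖M * W‖ ≤ infNorm Wᵀ * ‖M‖ := by
  refine (Matrix.norm_le_iff (mul_nonneg (infNorm_nonneg _) (norm_nonneg _))).2 fun i j => ?_
  calc ‖(M * W) i j‖ ≤ ∑ l, ‖M i l‖ * |W l j| := by
        rw [Matrix.mul_apply]
        exact (norm_sum_le _ _).trans_eq (by simp only [norm_mul, Real.norm_eq_abs])
    _ ≤ ∑ l, ‖M‖ * |W l j| := by
        gcongr; exact M.norm_entry_le_entrywise_sup_norm
    _ = ‖M‖ * ∑ l, |W l j| := Finset.mul_sum _ _ _ |>.symm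
    _ ≤ infNorm Wᵀ * ‖M‖ := by
        rw [mul_comm]; gcongr; exact sum_abs_le_infNorm_transpose W j

lemma norm_sum_diag_mul_mul_le {ι : Type*} [Fintype ι] {D : ι → Matrix m m ℝ}
    (hD : ∀ k, (D k).IsDiag) (hD1 : ∀ k i, |D k i i| ≤ 1) (W : ι → Matrix n n ℝ)
    (M : Matrix m n ℝ) : ‖∑ k, D k * M * W k‖ ≤ (∑ k, infNorm (W k)ᵀ) * ‖M‖ := by
  rw [Finset.sum_mul]
  refine (norm_sum_le _ _).trans (Finset.sum_le_sum fun k _ => ?_)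
  calc ‖D k * M * W k‖ ≤ infNorm (W k)ᵀ * ‖D k * M‖ := norm_mul_le_infNorm_transpose_mul _ _
    _ ≤ infNorm (W k)ᵀ * ‖M‖ := by
        gcongr; exacts [infNorm_nonneg _, norm_diag_mul_le (hD k) (hD1 k) M]

lemma contractingWith_sum_diag_mul_mul_add {ι : Type*} [Fintype ι] {D : ι → Matrix m m ℝ}
    (hD : ∀ k, (D k).IsDiag) (hD1 : ∀ k i, |D k i i| ≤ 1) {W : ι → Matrix n n ℝ}
    (hW : ∑ k, infNorm (W k)ᵀ < 1) (C : Matrix m n ℝ) :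
    ContractingWith (∑ k, infNorm (W k)ᵀ).toNNReal (fun M => ∑ k, D k * M * W k + C) := by
  have hK0 : 0 ≤ ∑ k, infNorm (W k)ᵀ := Finset.sum_nonneg fun k _ => infNorm_nonneg _
  refine ⟨by simpa using hW, LipschitzWith.of_dist_le_mul fun M N => ?_⟩
  have hsub : (∑ k, D k * M * W k + C) - (∑ k, D k * N * W k + C)
      = ∑ k, D k * (M - N) * W k := by
    simp only [Matrix.mul_sub, Matrix.sub_mul, Finset.sum_sub_distrib, add_sub_add_right_eq_sub]
  rw [dist_eq_norm, dist_eq_norm, hsub, Real.coe_toNNReal _ hK0]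
  exact norm_sum_diag_mul_mul_le hD hD1 W (M - N)

end EntrywiseSupNorm

lemma eq_iterate_of_succ {α : Type*} {f : α → α} {u : ℕ → α} (hu : ∀ t, u (t + 1) = f (u t))
    (t : ℕ) : u t = f^[t] (u 0) := by
  induction t with
  | zero => rfl
  | succ t ih => rw [Function.iterate_succ_apply', ← ih, hu t]

theorem stgc_recursion_converges_general {n d d' K₁ K₂ : ℕ}
    (D : Fin K₁ → Matrix (Fin n) (Fin n) ℝ)
    (hDdiag : ∀ k, (D k).IsDiag)
    (hDbound : ∀ k r, D k r r ∈ Set.Icc (-1 : ℝ) 1)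
    (W : Fin K₁ → Matrix (Fin d') (Fin d') ℝ)
    (hW : ∑ k, infNorm ((W k)ᵀ) < 1)
    (X : Matrix (Fin n) (Fin d) ℝ) (V0 : Matrix (Fin d) (Fin d') ℝ)
    (E : Fin (K₂ - 1) → Matrix (Fin n) (Fin n) ℝ)
    (V : Fin (K₂ - 1) → Matrix (Fin d) (Fin d') ℝ)
    (Y O : ℕ → Matrix (Fin n) (Fin d') ℝ)
    (hY : ∀ t, Y (t + 1) = ∑ k, D k * Y t * W k + X * V0)
    (hO : ∀ t, O (t + 1) = Y (t + 1) + ∑ k, E k * X * V k) :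
    ∃ Ystar : Matrix (Fin n) (Fin d') ℝ,
      (Ystar = ∑ k, D k * Ystar * W k + X * V0) ∧
      (∀ Z : Matrix (Fin n) (Fin d') ℝ,
        Z = ∑ k, D k * Z * W k + X * V0 → Z = Ystar) ∧
      (∀ i j, Filter.Tendsto (fun t => Y t i j) Filter.atTop (nhds (Ystar i j))) ∧
      (∀ i j, Filter.Tendsto (fun t => O t i j) Filter.atTop
        (nhds ((Ystar + ∑ k, E k * X * V k) i j))) := by
  have hf := contractingWith_sum_diag_mul_mul_add hDdiag (fun k i => abs_le.2 (hDbound k i)) hW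
    (X * V0)
  set Ystar := hf.fixedPoint _
  have hYlim : Tendsto Y atTop (𝓝 Ystar) := by
    have h := hf.tendsto_iterate_fixedPoint (Y 0)
    rwa [← funext (eq_iterate_of_succ (f := fun M => ∑ k, D k * M * W k + X * V0) hY)] at h
  have hOlim : Tendsto O atTop (𝓝 (Ystar + ∑ k, E k * X * V k)) := by
    rw [← tendsto_add_atTop_iff_nat 1]
    simpa only [hO] using ((tendsto_add_atTop_iff_nat 1).2 hYlim).add_const _
  exact ⟨Ystar, hf.fixedPoint_isFixedPt.symm, fun Z hZ => hf.fixedPoint_unique hZ.symm,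
    fun i j => tendsto_pi_nhds.1 (tendsto_pi_nhds.1 hYlim i) j,
    fun i j => tendsto_pi_nhds.1 (tendsto_pi_nhds.1 hOlim i) j⟩

/-- Convergence of the spatio-temporal graph convolution recursion
`Y_{t+1} = ∑ k, D k * Y t * W k + X * V₀`,
`O_{t+1} = Y_{t+1} + ∑ k, E k * X * V k`:
if the `D k` (and `E k`) are diagonal with diagonal entries in `[-1,1]` and
`∑ k, ‖(W k)ᵀ‖_∞ < 1`, then there is a unique fixed point `Y*`, the sequence
`Y t` converges to it entrywise from any initial `Y₀`, and `O t` converges to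
`O* = Y* + ∑ k, E k * X * V k`. -/
theorem stgc_recursion_converges {n d d' K₁ K₂ : ℕ} (hK₁ : 1 ≤ K₁)
    (D : Fin K₁ → Matrix (Fin n) (Fin n) ℝ)
    (hDdiag : ∀ k, (D k).IsDiag)
    (hDbound : ∀ k r, D k r r ∈ Set.Icc (-1 : ℝ) 1)
    (W : Fin K₁ → Matrix (Fin d') (Fin d') ℝ)
    (hW : ∑ k, infNorm ((W k)ᵀ) < 1)
    (X : Matrix (Fin n) (Fin d) ℝ) (V0 : Matrix (Fin d) (Fin d') ℝ)
    (E : Fin (K₂ - 1) → Matrix (Fin n) (Fin n) ℝ)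
    (hEdiag : ∀ k, (E k).IsDiag)
    (hEbound : ∀ k r, E k r r ∈ Set.Icc (-1 : ℝ) 1)
    (V : Fin (K₂ - 1) → Matrix (Fin d) (Fin d') ℝ)
    (Y O : ℕ → Matrix (Fin n) (Fin d') ℝ)
    (hY : ∀ t, Y (t + 1) = ∑ k, D k * Y t * W k + X * V0)
    (hO : ∀ t, O (t + 1) = Y (t + 1) + ∑ k, E k * X * V k) :
    ∃ Ystar : Matrix (Fin n) (Fin d') ℝ,
      (Ystar = ∑ k, D k * Ystar * W k + X * V0) ∧
      (∀ Z : Matrix (Fin n) (Fin d') ℝ,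
        Z = ∑ k, D k * Z * W k + X * V0 → Z = Ystar) ∧
      (∀ i j, Filter.Tendsto (fun t => Y t i j) Filter.atTop (nhds (Ystar i j))) ∧
      (∀ i j, Filter.Tendsto (fun t => O t i j) Filter.atTop
        (nhds ((Ystar + ∑ k, E k * X * V k) i j))) :=
  stgc_recursion_converges_general D hDdiag hDbound W hW X V0 E V Y O hY hO
end

section
/- Let K₁ ≥ 1, and for k = 0,…,K₁−1 let D_k be an n×n real diagonal matrix and w_k ∈ ℝ^d a vector; assume that for all i = 1,…,d and j = 1,…,n, |∑_{k=0}^{K₁−1} w_{k,i} (D_k)_{jj}| < 1. Let X be a fixed n×d real matrix, v₀ ∈ ℝ^d, and for k = 1,…,K₂−1 let E_k be an n×n real diagonal matrix and v_k ∈ ℝ^d. Define the recursion Y_{t+1} = ∑_{k=0}^{K₁−1} D_k Y_t diag(w_k) + X diag(v₀) and O_{t+1} = Y_{t+1} + ∑_{k=1}^{K₂−1} E_k X diag(v_k), starting from an arbitrary n×d real matrix Y₀. Then for every entry (j,i), O_t(j,i) converges as t → ∞ to T_{ji} · X_{ji}, where T_{ji} = v_{0,i} / (1 − ∑_{k=0}^{K₁−1}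 w_{k,i} (D_k)_{jj}) + ∑_{k=1}^{K₂−1} (E_k)_{jj} v_{k,i}. -/
/-! Diagonal transformations act entrywise, so every entry of `Y` follows a scalar affine
recurrence `y ↦ a * y + c` with `|a| < 1`; it converges to the fixed point `c / (1 - a)`,
and `O` differs from `Y` by a constant. -/

open Filter Matrix

theorem tendsto_of_affine_recurrence {𝕜 : Type*} [NormedField 𝕜] {a c : 𝕜} (ha : ‖a‖ < 1)
    {y : ℕ → 𝕜} (hy : ∀ t, y (t + 1) = a * y t + c) :
    Tendsto y atTop (nhds (c / (1 - a))) := by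
  have h1a : 1 - a ≠ 0 := sub_ne_zero.mpr fun h => by simp [← h] at ha
  set L := c / (1 - a)
  have hfix : a * L + c = L := by
    simp only [L]
    field_simp
    ring
  have hclosed : ∀ t, y t = a ^ t * (y 0 - L) + L := by
    intro t
    induction t with
    | zero => simp
    | succ t ih => rw [hy t, ih]; linear_combination hfix
  have hlim : Tendsto (fun t => a ^ t * (y 0 - L) + L) atTop (nhds (0 * (y 0 - L) + L)) :=
    ((tendsto_pow_atTop_nhds_zero_of_norm_lt_one ha).mul_const _).add_const _
  rw [zero_mul, zero_add] at hlim
  exact hlim.congr fun t => (hclosed t).symm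

theorem Matrix.diagonal_mul_mul_diagonal_apply {m n α : Type*} [Fintype m] [Fintype n]
    [DecidableEq m] [DecidableEq n] [CommSemiring α] (a : m → α) (M : Matrix m n α)
    (b : n → α) (j : m) (i : n) :
    (diagonal a * M * diagonal b) j i = a j * b i * M j i := by
  rw [mul_diagonal, diagonal_mul]
  ring

theorem Matrix.sum_diagonal_mul_mul_diagonal_apply {ι m n α : Type*} [Fintype ι] [Fintype m]
    [Fintype n] [DecidableEq m] [DecidableEq n] [CommSemiring α] (a : ι → m → α)
    (M : Matrix m n α) (b : ι → n → α) (j : m) (i : n) :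
    (∑ k, diagonal (a k) * M * diagonal (b k)) j i = (∑ k, b k i * a k j) * M j i := by
  simp only [sum_apply, diagonal_mul_mul_diagonal_apply, Finset.sum_mul, mul_comm (a _ j)]

theorem stgc_independent_recursion_converges_general {n d K₁ K₂ : ℕ}
    (dv : Fin K₁ → Fin n → ℝ) (w : Fin K₁ → Fin d → ℝ)
    (hcontr : ∀ (i : Fin d) (j : Fin n), |∑ k, w k i * dv k j| < 1)
    (X : Matrix (Fin n) (Fin d) ℝ) (v0 : Fin d → ℝ)
    (e : Fin (K₂ - 1) → Fin n → ℝ) (v : Fin (K₂ - 1) → Fin d → ℝ)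
    (Y O : ℕ → Matrix (Fin n) (Fin d) ℝ)
    (hY : ∀ t, Y (t + 1) =
      ∑ k, Matrix.diagonal (dv k) * Y t * Matrix.diagonal (w k) +
        X * Matrix.diagonal v0)
    (hO : ∀ t, O (t + 1) = Y (t + 1) +
      ∑ k, Matrix.diagonal (e k) * X * Matrix.diagonal (v k)) :
    ∀ (j : Fin n) (i : Fin d),
      Filter.Tendsto (fun t => O t j i) Filter.atTop
        (nhds ((v0 i / (1 - ∑ k, w k i * dv k j) + ∑ k, e k j * v k i) * X j i)) := by
  intro j i
  have hYji : ∀ t, Y (t + 1) j i = (∑ k, w k i * dv k j) * Y t j i + v0 i * X j i := by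
    intro t
    rw [hY, Matrix.add_apply, sum_diagonal_mul_mul_diagonal_apply, mul_diagonal, mul_comm (X j i)]
  have hOji : ∀ t, O (t + 1) j i = Y (t + 1) j i + (∑ k, e k j * v k i) * X j i := by
    intro t
    rw [hO, Matrix.add_apply, sum_diagonal_mul_mul_diagonal_apply, Finset.sum_congr rfl
      fun k _ => mul_comm (v k i) (e k j)]
  have hYlim := tendsto_of_affine_recurrence (y := fun t => Y t j i) (by rw [Real.norm_eq_abs]; exact hcontr i j) hYji
  rw [← tendsto_add_atTop_iff_nat 1, add_mul, div_mul_eq_mul_div]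
  exact ((hYlim.comp (tendsto_add_atTop_nat 1)).add_const _).congr fun t => (hOji t).symm

/-- The signal-independent spatio-temporal graph convolution recursion
`Y_{t+1} = ∑ k, diag(dv k) * Y t * diag(w k) + X * diag(v₀)`,
`O_{t+1} = Y_{t+1} + ∑ k, diag(e k) * X * diag(v k)` converges entrywise:
when `|∑ k, w k i * dv k j| < 1` for all `i, j`, each entry `O t j i` tends to
`T_{ji} * X j i` with
`T_{ji} = v₀ i / (1 - ∑ k, w k i * dv k j) + ∑ k, e k j * v k i`. -/
theorem stgc_independent_recursion_converges {n d K₁ K₂ : ℕ} (hK₁ : 1 ≤ K₁)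
    (dv : Fin K₁ → Fin n → ℝ) (w : Fin K₁ → Fin d → ℝ)
    (hcontr : ∀ (i : Fin d) (j : Fin n), |∑ k, w k i * dv k j| < 1)
    (X : Matrix (Fin n) (Fin d) ℝ) (v0 : Fin d → ℝ)
    (e : Fin (K₂ - 1) → Fin n → ℝ) (v : Fin (K₂ - 1) → Fin d → ℝ)
    (Y O : ℕ → Matrix (Fin n) (Fin d) ℝ)
    (hY : ∀ t, Y (t + 1) =
      ∑ k, Matrix.diagonal (dv k) * Y t * Matrix.diagonal (w k) +
        X * Matrix.diagonal v0)
    (hO : ∀ t, O (t + 1) = Y (t + 1) +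
      ∑ k, Matrix.diagonal (e k) * X * Matrix.diagonal (v k)) :
    ∀ (j : Fin n) (i : Fin d),
      Filter.Tendsto (fun t => O t j i) Filter.atTop
        (nhds ((v0 i / (1 - ∑ k, w k i * dv k j) + ∑ k, e k j * v k i) * X j i)) :=
  stgc_independent_recursion_converges_general dv w hcontr X v0 e v Y O hY hO
end
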